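/- arXiv:2002.11856 — 6 statements merged into one kernel-verified Lean document; each statement's English description precedes it below -/
import Mathlib

section
/- If h : ℂⁿ → ℂ is an entire function such that the map z ↦ h(z)·z from ℂⁿ to ℂⁿ is injective and h(0) = 1, then h is identically equal to 1. -/
/-!
Fix `z ≠ 0` and restrict to the complex line through `z`: with `φ t = h (t • z)`, injectivity of
`h • id` says that `g t = t * φ t` is an injective entire function. Then `φ` has no zeros, and
since `g` is an injective open map, `‖g t‖ ≥ ε > 0` for `‖t‖ ≥ 1`. Hence `1 / φ t = t / g t`
grows at most linearly, so by Liouville's theorem `1 / φ` is affine; an affine function without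
zeros is constant, and `φ 0 = 1`.
-/

open Filter Metric Set Asymptotics

theorem IsOpenMap.exists_pos_le_dist_of_injective {X Y : Type*} [PseudoMetricSpace X]
    [PseudoMetricSpace Y] {g : X → Y} (hg : IsOpenMap g) (hinj : Function.Injective g) (c : X)
    {r : ℝ} (hr : 0 < r) : ∃ ε > 0, ∀ x, r ≤ dist x c → ε ≤ dist (g x) (g c) := by
  obtain ⟨ε, hε, hball⟩ := Metric.isOpen_iff.1 (hg _ isOpen_ball) (g c)
    (mem_image_of_mem g (mem_ball_self hr))
  refine ⟨ε, hε, fun x hx => not_lt.1 fun hlt => ?_⟩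
  obtain ⟨y, hy, hyx⟩ := hball (mem_ball.2 hlt)
  rw [hinj hyx, mem_ball] at hy
  exact hx.not_gt hy

theorem Differentiable.exists_eq_add_mul_of_isBigO_id {f : ℂ → ℂ} (hf : Differentiable ℂ f)
    (hO : f =O[cocompact ℂ] id) : ∃ a, ∀ t, f t = f 0 + a * t := by
  have hdiff : Differentiable ℂ (dslope f 0) :=
    differentiableOn_univ.1 ((Complex.differentiableOn_dslope univ_mem).2 hf.differentiableOn)
  obtain ⟨C, hC⟩ := hO.bound
  have hbdd : dslope f 0 =O[cocompact ℂ] (1 : ℂ → ℝ) := by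
    refine IsBigO.of_bound (C + ‖f 0‖) ?_
    filter_upwards [hC, tendsto_norm_cocompact_atTop.eventually_ge_atTop 1] with t hCt ht
    have ht0 : 0 < ‖t‖ := one_pos.trans_le ht
    rw [dslope_of_ne _ (norm_pos_iff.1 ht0), slope_def_field, sub_zero, norm_div,
      Pi.one_apply, norm_one, mul_one, div_le_iff₀ ht0]
    calc ‖f t - f 0‖ ≤ ‖f t‖ + ‖f 0‖ := norm_sub_le _ _
      _ ≤ C * ‖t‖ + ‖f 0‖ * ‖t‖ := add_le_add hCt (le_mul_of_one_le_right (norm_nonneg _) ht)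
      _ = (C + ‖f 0‖) * ‖t‖ := by ring
  refine ⟨dslope f 0 0, fun t => ?_⟩
  have := sub_smul_dslope f 0 t
  rw [hdiff.apply_eq_apply_of_bounded (hdiff.continuous.isBounded_range_iff_isBigO.2 hbdd) t 0,
    sub_zero, smul_eq_mul] at this
  linear_combination -this

theorem Differentiable.apply_eq_apply_zero_of_isBigO_id_of_ne_zero {f : ℂ → ℂ}
    (hf : Differentiable ℂ f) (hO : f =O[cocompact ℂ] id) (hne : ∀ t, f t ≠ 0) (t : ℂ) :
    f t = f 0 := by
  obtain ⟨a, ha⟩ := hf.exists_eq_add_mul_of_isBigO_id hO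
  obtain rfl : a = 0 := by
    by_contra ha0
    apply hne (-f 0 / a)
    rw [ha]
    field_simp
    ring
  simpa using ha t

theorem eq_one_of_injective_mul {φ : ℂ → ℂ} (hφ : Differentiable ℂ φ) (hφ0 : φ 0 = 1)
    (hinj : Function.Injective fun t => t * φ t) (t : ℂ) : φ t = 1 := by
  set g : ℂ → ℂ := fun t => t * φ t
  have hne : ∀ t, φ t ≠ 0 := fun t ht => by
    obtain rfl : t = 0 := hinj (by simp [g, ht])
    exact one_ne_zero (hφ0 ▸ ht)
  have hopen : IsOpenMap g := by
    have hg : Differentiable ℂ g := differentiable_id.mul hφ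
    refine (hg.differentiableOn.analyticOnNhd isOpen_univ).is_constant_or_isOpenMap.resolve_left ?_
    rintro ⟨w, hw⟩
    exact zero_ne_one (hinj ((hw 0).trans (hw 1).symm))
  obtain ⟨ε, hε, hlow⟩ := hopen.exists_pos_le_dist_of_injective hinj 0 one_pos
  have hO : (fun t => (φ t)⁻¹) =O[cocompact ℂ] id := by
    refine IsBigO.of_bound ε⁻¹ ?_
    filter_upwards [tendsto_norm_cocompact_atTop.eventually_ge_atTop 1] with t ht
    have hgt : ε ≤ ‖g t‖ := by simpa [g] using hlow t (by simpa using ht)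
    calc ‖(φ t)⁻¹‖ = ‖t‖ / ‖g t‖ := by
          rw [norm_inv, norm_mul, div_mul_cancel_left₀ (one_pos.trans_le ht).ne']
      _ ≤ ‖t‖ / ε := by gcongr
      _ = ε⁻¹ * ‖id t‖ := by rw [id, div_eq_inv_mul]
  simpa [hφ0] using (hφ.inv hne).apply_eq_apply_zero_of_isBigO_id_of_ne_zero hO
    (fun t => inv_ne_zero (hne t)) t

theorem Function.Injective.mul_comp_smul {𝕜 E : Type*} [Field 𝕜] [AddCommGroup E] [Module 𝕜 E]
    {h : E → 𝕜} (hinj : Function.Injective fun z => h z • z) {z : E} (hz : z ≠ 0) :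
    Function.Injective fun t : 𝕜 => t * h (t • z) := by
  intro s t hst
  refine smul_left_injective 𝕜 hz (hinj ?_)
  simp only [smul_smul, mul_comm (h _)] at hst ⊢
  rw [hst]

theorem entire_scalar_times_id_injective_eq_one_general {n : ℕ}
    (h : EuclideanSpace ℂ (Fin n) → ℂ) (hhol : Differentiable ℂ h)
    (hinj : Function.Injective (fun z : EuclideanSpace ℂ (Fin n) => h z • z))
    (h0 : h 0 = 1) :
    ∀ z, h z = 1 := by
  intro z
  rcases eq_or_ne z 0 with rfl | hz
  · exact h0
  · simpa using eq_one_of_injective_mul (hhol.comp (differentiable_id.smul_const z))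
      (by simpa using h0) (hinj.mul_comp_smul hz) 1

theorem entire_scalar_times_id_injective_eq_one {n : ℕ} (hn : 1 ≤ n)
    (h : EuclideanSpace ℂ (Fin n) → ℂ) (hhol : Differentiable ℂ h)
    (hinj : Function.Injective (fun z : EuclideanSpace ℂ (Fin n) => h z • z))
    (h0 : h 0 = 1) :
    ∀ z, h z = 1 :=
  entire_scalar_times_id_injective_eq_one_general h hhol hinj h0
end

section
/- An injective entire function f : ℂ → ℂ is affine, i.e., there exist a, b ∈ ℂ with a ≠ 0 such that f(z) = a·z + b for all z. -/
/-!
By the open mapping theorem and injectivity, `f` stays a positive distance away from `f 0` outside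
the unit disc, so `z ↦ 1 / (f (1 / z) - f 0)` is bounded near `0` and extends analytically across
it. Its order of vanishing `n` at `0` gives `f w = O(wⁿ)` at infinity, so Liouville's theorem,
applied to iterated difference quotients `dslope`, makes `f` a polynomial. An injective complex
polynomial `p` has degree one: otherwise `p - p 0 = a Xᵈ` with `d ≥ 2` (its only root is `0`),
which takes equal values at `1` and at a primitive `d`-th root of unity.
-/

open Filter Function Metric Polynomial Asymptotics Bornology
open scoped Topology

theorem AnalyticAt.nhds_le_map_nhds_of_injective {E : Type*} [NormedAddCommGroup E]
    [NormedSpace ℂ E] [Nontrivial E] {g : E → ℂ} {z₀ : E} (hg : AnalyticAt ℂ g z₀)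
    (hinj : Injective g) : 𝓝 (g z₀) ≤ map g (𝓝 z₀) := by
  refine hg.eventually_constant_or_nhds_le_map_nhds.resolve_left fun hconst => ?_
  obtain ⟨z, hz, hne⟩ :=
    ((hconst.filter_mono nhdsWithin_le_nhds).and self_mem_nhdsWithin).exists (f := 𝓝[≠] z₀)
  exact hne (hinj hz)

theorem Differentiable.isBoundedUnder_norm_inv_sub_of_injective {f : ℂ → ℂ}
    (hf : Differentiable ℂ f) (hinj : Injective f) (x : ℂ) :
    IsBoundedUnder (· ≤ ·) (cobounded ℂ) fun w => ‖(f w - f x)⁻¹‖ := by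
  obtain ⟨r, hr, hball⟩ := Metric.mem_nhds_iff.mp <|
    (hf.analyticAt x).nhds_le_map_nhds_of_injective hinj (image_mem_map (ball_mem_nhds x one_pos))
  refine ⟨r⁻¹, eventually_map.2 ?_⟩
  filter_upwards [isBounded_def.1 (isBounded_ball (x := x) (r := 1))] with w hw
  have hrw : r ≤ ‖f w - f x‖ := by
    by_contra! h
    obtain ⟨y, hy, hyw⟩ := hball (mem_ball_iff_norm.2 h)
    exact hw (hinj hyw ▸ hy)
  rw [norm_inv]
  exact inv_anti₀ hr hrw

theorem exists_analyticAt_zero_eq_comp_inv {E : Type*} [NormedAddCommGroup E] [NormedSpace ℂ E]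
    [CompleteSpace E] {h : ℂ → E} (hd : ∀ᶠ w in cobounded ℂ, DifferentiableAt ℂ h w)
    (hb : IsBoundedUnder (· ≤ ·) (cobounded ℂ) fun w => ‖h w‖) :
    ∃ G : ℂ → E, AnalyticAt ℂ G 0 ∧ ∀ z ≠ 0, G z = h z⁻¹ := by
  set F : ℂ → E := fun z => h z⁻¹
  have hFd : ∀ᶠ z in 𝓝[≠] 0, DifferentiableAt ℂ F z := by
    filter_upwards [tendsto_inv₀_nhdsNE_zero.eventually hd, self_mem_nhdsWithin] with z hz hz0
    exact hz.comp z (differentiableAt_inv hz0)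
  have hFb : IsBoundedUnder (· ≤ ·) (𝓝[≠] 0) fun z => ‖F z - F 0‖ := by
    obtain ⟨C, hC⟩ := hb
    refine ⟨C + ‖F 0‖, eventually_map.2 ?_⟩
    filter_upwards [tendsto_inv₀_nhdsNE_zero.eventually (eventually_map.1 hC)] with z hz
    exact (norm_sub_le _ _).trans (by gcongr)
  refine ⟨update F 0 (limUnder (𝓝[≠] 0) F), ?_, fun z hz => update_of_ne hz _ _⟩
  refine Complex.analyticAt_of_differentiable_on_punctured_nhds_of_continuousAt ?_ ?_
  · filter_upwards [hFd, self_mem_nhdsWithin] with z hz hz0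
    exact hz.congr_of_eventuallyEq <| (eventually_ne_nhds hz0).mono fun w hw => update_of_ne hw _ _
  · exact continuousAt_update_same.2 <|
      Complex.tendsto_limUnder_of_differentiable_on_punctured_nhds_of_bounded_under hFd hFb

theorem isBigO_const_pow_cobounded (c : ℂ) (n : ℕ) : (fun _ => c) =O[cobounded ℂ] (· ^ n) := by
  refine IsBigO.of_bound ‖c‖ ?_
  filter_upwards [eventually_cobounded_le_norm 1] with w hw
  rw [norm_pow]
  exact le_mul_of_one_le_right (norm_nonneg c) (one_le_pow₀ hw)

theorem isBigO_pow_of_analyticAt_inv_comp_inv {φ G : ℂ → ℂ} (hG : AnalyticAt ℂ G 0)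
    (heq : ∀ z ≠ 0, G z = (φ z⁻¹)⁻¹) : ∃ n : ℕ, φ =O[cobounded ℂ] (· ^ n) := by
  have hinv : Tendsto Inv.inv (cobounded ℂ) (𝓝[≠] 0) := tendsto_inv₀_cobounded'
  have hφG : ∀ᶠ w in cobounded ℂ, (φ w)⁻¹ = G w⁻¹ := by
    filter_upwards [hinv.eventually self_mem_nhdsWithin] with w hw
    rw [heq _ hw, inv_inv]
  by_cases hG0 : ∀ᶠ z in 𝓝 0, G z = 0
  -- then `φ` vanishes near infinity, because `(φ w)⁻¹ = 0` only when `φ w = 0`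
  · refine ⟨0, (isBigO_zero _ _).congr' ?_ EventuallyEq.rfl⟩
    filter_upwards [hφG, hinv.eventually (hG0.filter_mono nhdsWithin_le_nhds)] with w h1 h2
    rw [h2, inv_eq_zero] at h1
    exact h1.symm
  obtain ⟨n, g, hg, hg0, hGg⟩ := hG.exists_eventuallyEq_pow_smul_nonzero_iff.mpr hG0
  have hbdd : (fun w => (g w⁻¹)⁻¹) =O[cobounded ℂ] (fun _ => (1 : ℂ)) :=
    ((hg.continuousAt.tendsto.comp tendsto_inv₀_cobounded).inv₀ hg0).isBigO_one ℂ
  refine ⟨n, ((isBigO_refl (· ^ n) _).mul hbdd).congr' ?_ (by simp)⟩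
  filter_upwards [hφG, hinv.eventually (hGg.filter_mono nhdsWithin_le_nhds)] with w h1 h2
  rw [← inv_inv (φ w), h1, h2, sub_zero, smul_eq_mul, mul_inv, inv_pow, inv_inv]

theorem isBigO_dslope_zero_pow {f : ℂ → ℂ} {n : ℕ} (hO : f =O[cobounded ℂ] (· ^ (n + 1))) :
    dslope f 0 =O[cobounded ℂ] (· ^ n) := by
  have hsub := hO.sub (isBigO_const_pow_cobounded (f 0) (n + 1))
  refine ((isBigO_refl (·⁻¹) _).mul hsub).congr' ?_ ?_
  · filter_upwards [eventually_ne_cobounded 0] with w hw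
    rw [dslope_of_ne f hw, slope_def_module, sub_zero, smul_eq_mul]
  · filter_upwards [eventually_ne_cobounded 0] with w hw
    rw [pow_succ', inv_mul_cancel_left₀ hw]

theorem Differentiable.exists_polynomial_eq_of_isBigO_pow {f : ℂ → ℂ} (hf : Differentiable ℂ f)
    {n : ℕ} (hO : f =O[cobounded ℂ] (· ^ n)) : ∃ p : ℂ[X], ∀ z, f z = p.eval z := by
  induction n generalizing f with
  | zero =>
    have hbdd : IsBounded (Set.range f) := by
      rw [hf.continuous.isBounded_range_iff_isBigO, ← cobounded_eq_cocompact]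
      exact hO.trans (isBigO_of_le _ fun z => by simp)
    obtain ⟨c, hc⟩ := hf.exists_const_forall_eq_of_bounded hbdd
    exact ⟨C c, by simp [hc]⟩
  | succ n ih =>
    have hd : Differentiable ℂ (dslope f 0) := fun z =>
      ((Complex.differentiableOn_dslope univ_mem).2 hf.differentiableOn z trivial).differentiableAt
        univ_mem
    obtain ⟨q, hq⟩ := ih hd (isBigO_dslope_zero_pow hO)
    refine ⟨C (f 0) + X * q, fun z => ?_⟩
    have := sub_smul_dslope f 0 z
    rw [sub_zero, smul_eq_mul, hq z] at this
    simp only [eval_add, eval_C, eval_mul, eval_X]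
    linear_combination -this

theorem Polynomial.natDegree_le_one_of_injective_eval {k : Type*} [Field k] [IsAlgClosed k]
    [CharZero k] {p : k[X]} (hp : Injective fun x => p.eval x) : p.natDegree ≤ 1 := by
  by_contra! hd
  set q := p - C (p.eval 0)
  have hqd : q.natDegree = p.natDegree := natDegree_sub_C
  have hq : q ≠ 0 := fun h => by simp [h] at hqd; omega
  have hroots : q.roots = Multiset.replicate q.natDegree 0 := by
    rw [Multiset.eq_replicate, IsAlgClosed.card_roots_eq_natDegree]
    refine ⟨rfl, fun x hx => hp ?_⟩
    simpa [q, sub_eq_zero] using (mem_roots hq).1 hx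
  have hq_eq : q = C q.leadingCoeff * X ^ q.natDegree := by
    conv_lhs => rw [(IsAlgClosed.splits q).eq_prod_roots, hroots]
    simp
  have : NeZero (q.natDegree : k) := ⟨by exact_mod_cast (by omega : q.natDegree ≠ 0)⟩
  obtain ⟨ζ, hζ⟩ := HasEnoughRootsOfUnity.exists_primitiveRoot k q.natDegree
  have hζq : q.eval ζ = q.eval 1 := by rw [hq_eq]; simp [hζ.pow_eq_one]
  exact hζ.ne_one (by omega) (hp (by simpa [q] using hζq))

theorem Polynomial.exists_eq_mul_add_of_injective_eval {k : Type*} [Field k] [IsAlgClosed k]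
    [CharZero k] {p : k[X]} (hp : Injective fun x => p.eval x) :
    ∃ a b : k, a ≠ 0 ∧ ∀ x, p.eval x = a * x + b := by
  obtain ⟨a, b, rfl⟩ : ∃ a b, p = C a * X + C b :=
    ⟨_, _, eq_X_add_C_of_natDegree_le_one (natDegree_le_one_of_injective_eval hp)⟩
  refine ⟨a, b, fun ha => zero_ne_one (hp ?_), fun x => by simp⟩
  simp [ha]

theorem injective_entire_is_affine (f : ℂ → ℂ) (hf : Differentiable ℂ f)
    (hinj : Function.Injective f) :
    ∃ a b : ℂ, a ≠ 0 ∧ ∀ z, f z = a * z + b := by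
  have hd : ∀ᶠ w in cobounded ℂ, DifferentiableAt ℂ (fun w => (f w - f 0)⁻¹) w := by
    filter_upwards [eventually_ne_cobounded 0] with w hw
    exact ((hf w).sub_const _).inv (sub_ne_zero.2 (hinj.ne hw))
  obtain ⟨G, hG, hGeq⟩ :=
    exists_analyticAt_zero_eq_comp_inv hd (hf.isBoundedUnder_norm_inv_sub_of_injective hinj 0)
  obtain ⟨n, hn⟩ := isBigO_pow_of_analyticAt_inv_comp_inv (φ := fun w => f w - f 0) hG hGeq
  obtain ⟨p, hp⟩ := hf.exists_polynomial_eq_of_isBigO_pow <|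
    (hn.add (isBigO_const_pow_cobounded (f 0) n)).congr_left fun w => sub_add_cancel _ _
  have hpinj : Injective fun z => p.eval z := fun x y hxy => hinj (by simpa only [hp] using hxy)
  obtain ⟨a, b, ha, hab⟩ := exists_eq_mul_add_of_injective_eval hpinj
  exact ⟨a, b, ha, fun z => (hp z).trans (hab z)⟩
end

section
/- If h : ℂ → ℂ is entire, h(0) = 1, and the map t ↦ h(t)·t is injective on ℂ, then h is constantly equal to 1. -/
/-!
An injective entire function `f` is an open map, so outside a disc it stays a fixed distance away
from `f 0`. Hence `(f w - f 0)⁻¹` is bounded at infinity and, by the removable singularity theorem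
at `∞`, has a limit there; the limit must be `0`, since otherwise `f` would be constant by
Liouville. So `f → ∞`. For `f t = h t * t`, with `h` zero-free, this says that the entire function
`1 / h` is `o(t)` at infinity, and such a function is constant.
-/
open Filter Bornology Metric Topology Asymptotics Function

variable {E : Type*} [NormedAddCommGroup E] [NormedSpace ℂ E] [CompleteSpace E]

theorem apply_ne_zero_of_injective_mul_self {M₀ : Type*} [MulZeroClass M₀] {h : M₀ → M₀}
    (h0 : h 0 ≠ 0) (hinj : Injective fun t => h t * t) (t : M₀) : h t ≠ 0 := by
  intro ht
  obtain rfl : t = 0 := hinj (by simp [ht])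
  exact h0 ht

namespace Complex

theorem exists_tendsto_cobounded_of_isLittleO_id {g : ℂ → E}
    (hd : ∀ᶠ w in cobounded ℂ, DifferentiableAt ℂ g w) (ho : g =o[cobounded ℂ] id) :
    ∃ c, Tendsto g (cobounded ℂ) (𝓝 c) := by
  set k : ℂ → E := fun z => g z⁻¹
  have hkd : ∀ᶠ z in 𝓝[≠] 0, DifferentiableAt ℂ k z := by
    filter_upwards [tendsto_inv₀_nhdsNE_zero.eventually hd, self_mem_nhdsWithin] with z hz hz0
    exact hz.comp z (differentiableAt_inv hz0)
  have hko : (fun z => k z - k 0) =o[𝓝[≠] 0] fun z => (z - 0)⁻¹ := by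
    simp only [sub_zero]
    exact (ho.comp_tendsto tendsto_inv₀_nhdsNE_zero).sub
      (isLittleO_const_id_cobounded (k 0) |>.comp_tendsto tendsto_inv₀_nhdsNE_zero)
  refine ⟨_, (tendsto_limUnder_of_differentiable_on_punctured_nhds_of_isLittleO hkd hko).comp
    tendsto_inv₀_cobounded' |>.congr fun w => ?_⟩
  simp [k]

end Complex

namespace Differentiable

variable {f : ℂ → ℂ}

theorem isOpenMap_of_injective (hf : Differentiable ℂ f) (hinj : Injective f) : IsOpenMap f :=
  (AnalyticOnNhd.is_constant_or_isOpenMap fun z _ => hf.analyticAt z).resolve_left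
    fun ⟨_, hw⟩ => zero_ne_one (hinj ((hw 0).trans (hw 1).symm))

theorem exists_pos_eventually_le_norm_sub_of_injective (hf : Differentiable ℂ f)
    (hinj : Injective f) (z₀ : ℂ) : ∃ ε > 0, ∀ᶠ z in cobounded ℂ, ε ≤ ‖f z - f z₀‖ := by
  obtain ⟨ε, hε, hball⟩ := Metric.mem_nhds_iff.1 <|
    (hf.isOpenMap_of_injective hinj).image_mem_nhds (ball_mem_nhds z₀ one_pos)
  refine ⟨ε, hε, ?_⟩
  filter_upwards [isBounded_def.1 (isBounded_ball (x := z₀) (r := 1))] with z hz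
  by_contra! hlt
  obtain ⟨w, hw, hwz⟩ := hball (mem_ball_iff_norm.2 hlt)
  exact hz (hinj hwz ▸ hw)

theorem exists_const_forall_eq_of_isLittleO_id {u : ℂ → E} (hu : Differentiable ℂ u)
    (ho : u =o[cobounded ℂ] id) : ∃ c, ∀ z, u z = c := by
  obtain ⟨c, hc⟩ := Complex.exists_tendsto_cobounded_of_isLittleO_id
    (Eventually.of_forall hu) ho
  exact ⟨c, fun z => hu.apply_eq_of_tendsto_cocompact z (cobounded_eq_cocompact (α := ℂ) ▸ hc)⟩

theorem tendsto_cobounded_of_injective (hf : Differentiable ℂ f) (hinj : Injective f) :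
    Tendsto f (cobounded ℂ) (cobounded ℂ) := by
  obtain ⟨ε, hε, hfar⟩ := hf.exists_pos_eventually_le_norm_sub_of_injective hinj 0
  set g : ℂ → ℂ := fun w => (f w - f 0)⁻¹
  have hne : ∀ᶠ w in cobounded ℂ, f w - f 0 ≠ 0 := by
    filter_upwards [hfar] with w hw
    exact norm_pos_iff.1 (hε.trans_le hw)
  have hgd : ∀ᶠ w in cobounded ℂ, DifferentiableAt ℂ g w := by
    filter_upwards [hne] with w hw
    exact ((hf w).sub_const _).inv hw
  have hgb : g =O[cobounded ℂ] fun _ => (1 : ℂ) := by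
    refine (isBigO_one_iff ℂ).2 ⟨ε⁻¹, eventually_map.2 ?_⟩
    filter_upwards [hfar] with w hw
    simpa [g] using inv_anti₀ hε hw
  obtain ⟨c, hc⟩ := Complex.exists_tendsto_cobounded_of_isLittleO_id hgd
    (hgb.trans_isLittleO (isLittleO_const_id_cobounded 1))
  obtain rfl : c = 0 := by
    by_contra hc0
    have hlim : Tendsto f (cobounded ℂ) (𝓝 (c⁻¹ + f 0)) := by
      refine ((hc.inv₀ hc0).add_const (f 0)).congr' ?_
      filter_upwards with w
      simp [g]
    rw [cobounded_eq_cocompact] at hlim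
    exact zero_ne_one (hinj ((hf.apply_eq_of_tendsto_cocompact 0 hlim).trans
      (hf.apply_eq_of_tendsto_cocompact 1 hlim).symm))
  have hinv : Tendsto (fun w => f w - f 0) (cobounded ℂ) (cobounded ℂ) := by
    refine (tendsto_inv₀_nhdsNE_zero.comp (tendsto_nhdsWithin_iff.2 ⟨hc, hne.mono
      fun w hw => inv_ne_zero hw⟩)).congr fun w => ?_
    simp [g]
  exact ((tendsto_add_const_cobounded (f 0)).comp hinv).congr fun w => sub_add_cancel _ _

end Differentiable

theorem entire_one_dim_scalar_times_id_injective_eq_one (h : ℂ → ℂ)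
    (hhol : Differentiable ℂ h) (h0 : h 0 = 1)
    (hinj : Function.Injective (fun t : ℂ => h t * t)) :
    ∀ t, h t = 1 := by
  have hne := apply_ne_zero_of_injective_mul_self (h0 ▸ one_ne_zero) hinj
  have hf : Differentiable ℂ fun t => h t * t := hhol.mul differentiable_id
  have ho : (fun t => (h t)⁻¹) =o[cobounded ℂ] id := by
    refine (isLittleO_iff_tendsto' ((eventually_ne_cobounded 0).mono fun t ht ht0 =>
      absurd ht0 ht)).2 ?_
    refine (tendsto_inv₀_cobounded.comp (hf.tendsto_cobounded_of_injective hinj)).congr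
      fun t => ?_
    simp only [comp_apply, div_eq_mul_inv, mul_inv]
  obtain ⟨c, hc⟩ := (hhol.inv hne).exists_const_forall_eq_of_isLittleO_id ho
  intro t
  simpa [h0, ← hc 0] using hc t
end

section
/- Let H : ℂⁿ → ℂⁿ be holomorphic with ‖H(z)‖ = ‖z‖ for all z, H(0) = 0, and DH(0) = I. Then H is the identity map. -/
/-!
Since `‖H z‖ = ‖z‖`, `H` is an entire map of linear growth vanishing at `0`. On every complex
line `w ↦ H (w • z)` Liouville's theorem, applied to the difference quotient at `0`, shows that
such a map is linear, so `H` coincides with its derivative `DH(0) = id`.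
-/

open Complex Metric

variable {E F : Type*} [NormedAddCommGroup E] [NormedSpace ℂ E]
  [NormedAddCommGroup F] [NormedSpace ℂ F] [CompleteSpace F]

/-- By Liouville, `dslope f 0` is constant: its values off `0` are bounded by `C` through the
growth bound, and at `0` by the Cauchy estimate on the unit circle. -/
theorem apply_eq_smul_deriv_zero_of_norm_le_mul_norm {f : ℂ → F}
    (hf : Differentiable ℂ f) (h0 : f 0 = 0) {C : ℝ} (hC : ∀ w, ‖f w‖ ≤ C * ‖w‖) (w : ℂ) :
    f w = w • deriv f 0 := by
  have hg : Differentiable ℂ (dslope f 0) := fun x =>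
    ((differentiableOn_dslope Filter.univ_mem).mpr hf.differentiableOn x trivial).differentiableAt
      Filter.univ_mem
  have hbound : ∀ x, ‖dslope f 0 x‖ ≤ C := by
    intro x
    rcases eq_or_ne x 0 with rfl | hx
    · rw [dslope_same, ← div_one C]
      refine norm_deriv_le_of_forall_mem_sphere_norm_le one_pos hf.diffContOnCl fun z hz => ?_
      simpa [mem_sphere_zero_iff_norm.mp hz] using hC z
    · rw [dslope_of_ne _ hx, slope_def_module, h0, sub_zero, sub_zero, norm_smul, norm_inv,
        inv_mul_le_iff₀ (norm_pos_iff.mpr hx), mul_comm]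
      exact hC x
  have hconst : dslope f 0 w = dslope f 0 0 :=
    hg.apply_eq_apply_of_bounded (isBounded_iff_forall_norm_le.mpr
      ⟨C, by rintro _ ⟨x, rfl⟩; exact hbound x⟩) w 0
  simpa [h0, hconst] using (sub_smul_dslope f 0 w).symm

theorem apply_eq_fderiv_zero_of_norm_le_mul_norm {f : E → F}
    (hf : Differentiable ℂ f) (h0 : f 0 = 0) {C : ℝ} (hC : ∀ z, ‖f z‖ ≤ C * ‖z‖) (z : E) :
    f z = fderiv ℂ f 0 z := by
  set g : ℂ → F := fun w => f (w • z)
  have hline : HasDerivAt (fun w : ℂ => w • z) z 0 := by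
    simpa using (hasDerivAt_id (0 : ℂ)).smul_const z
  have hg_deriv : HasDerivAt g (fderiv ℂ f 0 z) 0 := by
    have hf0 : HasFDerivAt f (fderiv ℂ f 0) ((0 : ℂ) • z) := by
      simpa using (hf 0).hasFDerivAt
    exact hf0.comp_hasDerivAt 0 hline
  have hg_bound (w : ℂ) : ‖g w‖ ≤ (C * ‖z‖) * ‖w‖ :=
    calc ‖g w‖ ≤ C * ‖w • z‖ := hC _
      _ = (C * ‖z‖) * ‖w‖ := by rw [norm_smul]; ring
  have hg : Differentiable ℂ g := hf.comp (differentiable_id.smul_const z)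
  have := apply_eq_smul_deriv_zero_of_norm_le_mul_norm hg (by simp [g, h0]) hg_bound 1
  simpa [g, hg_deriv.deriv] using this

theorem norm_preserving_normalized_is_id {n : ℕ}
    (H : EuclideanSpace ℂ (Fin n) → EuclideanSpace ℂ (Fin n))
    (hhol : Differentiable ℂ H)
    (hnorm : ∀ z, ‖H z‖ = ‖z‖) (h0 : H 0 = 0)
    (hD : fderiv ℂ H 0 = ContinuousLinearMap.id ℂ (EuclideanSpace ℂ (Fin n))) :
    ∀ z, H z = z := by
  have hgrowth (z : EuclideanSpace ℂ (Fin n)) : ‖H z‖ ≤ 1 * ‖z‖ := by rw [hnorm, one_mul]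
  intro z
  simpa [hD] using apply_eq_fderiv_zero_of_norm_le_mul_norm hhol h0 hgrowth z
end

section
/- Let F, G : ℂⁿ → ℂⁿ be biholomorphic automorphisms of ℂⁿ with F(0) = G(0) = 0 and DF(0) = DG(0) = I. If there is an entire function f : ℂⁿ → ℂ with ‖F(z)‖ = |e^{f(z)}|·‖G(z)‖ for all z, then F = G. -/
/-!
Put `Φ = F ∘ G⁻¹`. Then `‖Φ v‖ = |e^{k v}| ‖v‖` with `k = f ∘ G⁻¹`, so on every complex line
`t ↦ t • v` the map `t ↦ e^{-k (t • v)} • Φ (t • v)` has norm `|t| ‖v‖`; by the equality case of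
the Schwarz lemma it is linear, whence `Φ v = e^{k v - k 0} • v`, and in the same way
`Φ⁻¹ v = e^{m v} • v`. On a line through `v ≠ 0` this makes `φ t = t e^{h t}`, with
`h t = k (t • v) - k 0`, an entire function with a continuous left inverse. Such a `φ` is proper,
so `1 / φ (1 / z)` has a removable singularity at `0` and `φ` grows at most polynomially. Hence
`Re h = O(log |t|)`, and Borel–Carathéodory together with Cauchy's estimate forces `h` to be
constant, i.e. `h = h 0 = 0` and `Φ = id`.
-/

open Metric Set Filter Topology Complex Asymptotics Bornology

variable {E : Type*} [NormedAddCommGroup E] [NormedSpace ℂ E]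

theorem eq_smul_deriv_of_norm_eq_mul_norm [StrictConvexSpace ℝ E] {V : ℂ → E}
    (hV : Differentiable ℂ V) {a : ℝ} (hnorm : ∀ t, ‖V t‖ = a * ‖t‖) (t : ℂ) :
    V t = t • deriv V 0 := by
  have hV0 : V 0 = 0 := norm_eq_zero.mp (by simp [hnorm])
  have ha : 0 ≤ a := by simpa [hnorm] using norm_nonneg (V 1)
  set R := ‖t‖ + 2
  have hR : 0 < R := by positivity
  have hmaps : MapsTo V (ball 0 R) (closedBall (V 0) (a * R)) := fun z hz => by
    rw [hV0, mem_closedBall_zero_iff, hnorm]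
    exact mul_le_mul_of_nonneg_left (mem_ball_zero_iff.mp hz).le ha
  have h1 : (1 : ℂ) ∈ ball 0 R :=
    mem_ball_zero_iff.mpr (by simp only [norm_one, R]; linarith [norm_nonneg t])
  have hslope : ‖dslope V 0 1‖ = a * R / R := by
    rw [dslope_of_ne _ one_ne_zero, slope_def_module, mul_div_cancel_right₀ _ hR.ne']
    simp [hV0, hnorm]
  have haff :=
    Complex.affine_of_mapsTo_ball_of_norm_dslope_eq_div hV.differentiableOn hmaps h1 hslope
  have hderiv : deriv V 0 = dslope V 0 1 := by
    rw [(haff.eventuallyEq_of_mem (ball_mem_nhds 0 hR)).deriv_eq]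
    simpa using ((hasDerivAt_id (0 : ℂ)).smul_const (dslope V 0 1)).const_add (V 0) |>.deriv
  simpa [hV0, hderiv] using haff (mem_ball_zero_iff.mpr (by simp [R]) : t ∈ ball 0 R)

theorem eq_exp_smul_of_norm_eq_norm_exp_mul_norm [StrictConvexSpace ℝ E] {H : E → E}
    (hH : Differentiable ℂ H) (hDH : HasFDerivAt H (ContinuousLinearMap.id ℂ E) 0)
    {p : E → ℂ} (hp : Differentiable ℂ p) (hnorm : ∀ z, ‖H z‖ = ‖cexp (p z)‖ * ‖z‖) (w : E) :
    H w = cexp (p w - p 0) • w := by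
  have hH0 : H 0 = 0 := norm_eq_zero.mp (by simp [hnorm])
  set V : ℂ → E := fun t => cexp (-p (t • w)) • H (t • w)
  have hline : HasDerivAt (fun t : ℂ => t • w) w 0 := by
    simpa using (hasDerivAt_id (0 : ℂ)).smul_const w
  have hVdiff : Differentiable ℂ V :=
    have hline' : Differentiable ℂ fun t : ℂ => t • w := differentiable_id.smul_const w
    ((hp.comp hline').neg.cexp).smul (hH.comp hline')
  have hVnorm : ∀ t, ‖V t‖ = ‖w‖ * ‖t‖ := fun t => by
    simp only [V, norm_smul, hnorm, norm_exp, neg_re, Real.exp_neg]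
    field_simp
  have hVderiv : HasDerivAt V (cexp (-p 0) • w) 0 := by
    have hHline : HasDerivAt (fun t : ℂ => H (t • w)) w 0 := by
      simpa [Function.comp_def] using hDH.comp_hasDerivAt_of_eq 0 hline (zero_smul ℂ w).symm
    have hpline : HasDerivAt (fun t : ℂ => p (t • w)) (fderiv ℂ p 0 w) 0 :=
      (hp 0).hasFDerivAt.comp_hasDerivAt_of_eq 0 hline (zero_smul ℂ w).symm
    simpa [hH0] using hpline.fun_neg.cexp.fun_smul hHline
  have hV1 := eq_smul_deriv_of_norm_eq_mul_norm hVdiff hVnorm 1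
  rw [one_smul, hVderiv.deriv] at hV1
  simpa [V, smul_smul, ← Complex.exp_add, sub_eq_add_neg] using congrArg (cexp (p w) • ·) hV1

theorem HasFDerivAt.comp_of_rightInverse {𝕜 V : Type*} [NontriviallyNormedField 𝕜]
    [NormedAddCommGroup V] [NormedSpace 𝕜 V] {F G Ginv : V → V}
    (hF : HasFDerivAt F (ContinuousLinearMap.id 𝕜 V) 0)
    (hG : HasFDerivAt G (ContinuousLinearMap.id 𝕜 V) 0) (hGinv : ContinuousAt Ginv 0)
    (hGinv0 : Ginv 0 = 0) (hr : Function.RightInverse Ginv G) :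
    HasFDerivAt (F ∘ Ginv) (ContinuousLinearMap.id 𝕜 V) 0 := by
  rw [← hGinv0] at hF hG
  simpa using hF.comp 0
    (HasFDerivAt.of_local_left_inverse (f' := ContinuousLinearEquiv.refl 𝕜 V) hGinv hG
      (Eventually.of_forall hr))

theorem Differentiable.apply_eq_apply_of_norm_le_of_isLittleO {g : ℂ → E}
    (hg : Differentiable ℂ g) {B : ℝ → ℝ} (hB : B =o[atTop] id)
    (hgB : ∀ r z, ‖z‖ ≤ r → ‖g z‖ ≤ B r) (z w : ℂ) : g z = g w := by
  refine is_const_of_deriv_eq_zero hg (fun c => norm_le_zero_iff.mp ?_) z w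
  have hcauchy : ∀ r > 0, ‖_root_.deriv g c‖ ≤ B (‖c‖ + r) / r := fun r hr =>
    Complex.norm_deriv_le_of_forall_mem_sphere_norm_le hr hg.diffContOnCl fun z hz =>
      hgB _ z <| by
        rw [mem_sphere_iff_norm] at hz
        linarith [norm_le_norm_add_norm_sub' z c]
  have hlim : Tendsto (fun r => B (‖c‖ + r) / r) atTop (𝓝 0) :=
    ((hB.comp_tendsto (tendsto_atTop_add_const_left _ _ tendsto_id)).trans_isBigO
      ((isLittleO_const_id_atTop ‖c‖).add_isBigO (isBigO_refl _ _))).tendsto_div_nhds_zero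
  exact ge_of_tendsto hlim ((eventually_gt_atTop (0 : ℝ)).mono hcauchy)

theorem Differentiable.apply_eq_apply_of_re_le_of_isLittleO {h : ℂ → ℂ}
    (hh : Differentiable ℂ h) {B : ℝ → ℝ} (hB : B =o[atTop] id)
    (hhB : ∀ r z, ‖z‖ ≤ r → (h z).re ≤ B r) (z w : ℂ) : h z = h w := by
  set M : ℝ → ℝ := fun r => |B (2 * r + 2)| + ‖h 0‖ + 1
  have hbound : ∀ r z, ‖z‖ ≤ r → ‖h z - h 0‖ ≤ 2 * M r := by
    intro r z hz
    have hR : 0 < 2 * r + 2 := by linarith [norm_nonneg z]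
    have hM : 0 < M r := by positivity
    have hre : MapsTo (fun z => h z - h 0) (ball 0 (2 * r + 2)) {w | w.re ≤ M r} :=
      fun w hw => by
        have := hhB _ w (mem_ball_zero_iff.mp hw).le
        simp only [mem_ofPred_eq, sub_re, M]
        linarith [le_abs_self (B (2 * r + 2)), neg_abs_le (h 0).re, abs_re_le_norm (h 0)]
    calc ‖h z - h 0‖ ≤ 2 * M r * ‖z‖ / (2 * r + 2 - ‖z‖) :=
          Complex.borelCaratheodory_zero hM (hh.sub_const _).differentiableOn hre hR
            (mem_ball_zero_iff.mpr (by linarith)) (sub_self _)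
      _ ≤ 2 * M r := by
          rw [div_le_iff₀ (by linarith)]
          exact mul_le_mul_of_nonneg_left (by linarith) (by positivity)
  have hlin : (fun r : ℝ => 2 * r + 2) =O[atTop] id :=
    ((isBigO_refl _ _).const_mul_left 2).add (isLittleO_const_id_atTop 2).isBigO
  have hM : (fun r => 2 * M r) =o[atTop] id :=
    ((((hB.comp_tendsto (tendsto_atTop_add_const_right _ 2
      (tendsto_id.const_mul_atTop two_pos))).trans_isBigO hlin).norm_left.add
      (isLittleO_const_id_atTop _)).add (isLittleO_const_id_atTop _)).const_mul_left 2
  simpa using (hh.sub_const (h 0)).apply_eq_apply_of_norm_le_of_isLittleO hM hbound z w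

theorem Function.LeftInverse.tendsto_cocompact {X Y : Type*} [TopologicalSpace X]
    [TopologicalSpace Y] {φ : X → Y} {ψ : Y → X} (h : Function.LeftInverse ψ φ)
    (hψ : Continuous ψ) : Tendsto φ (cocompact X) (cocompact Y) := by
  rw [hasBasis_cocompact.tendsto_right_iff]
  intro K hK
  filter_upwards [(hK.image hψ).compl_mem_cocompact] with t ht hmem
  exact ht ⟨φ t, hmem, h t⟩

theorem AnalyticAt.exists_mul_norm_pow_le_norm {𝕜 F : Type*} [NontriviallyNormedField 𝕜]
    [NormedAddCommGroup F] [NormedSpace 𝕜 F] {f : 𝕜 → F} {z₀ : 𝕜} (hf : AnalyticAt 𝕜 f z₀)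
    (hord : analyticOrderAt f z₀ ≠ ⊤) :
    ∃ (N : ℕ) (c : ℝ), 0 < c ∧ ∀ᶠ z in 𝓝 z₀, c * ‖z - z₀‖ ^ N ≤ ‖f z‖ := by
  obtain ⟨N, hN⟩ := ENat.ne_top_iff_exists.mp hord
  obtain ⟨u, hu, hu0, hfu⟩ := hf.analyticOrderAt_eq_natCast.mp hN.symm
  have hu0' : 0 < ‖u z₀‖ := norm_pos_iff.mpr hu0
  refine ⟨N, ‖u z₀‖ / 2, by positivity, ?_⟩
  filter_upwards [hfu, hu.continuousAt.norm.eventually (lt_mem_nhds (half_lt_self hu0'))]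
    with z hz hlt
  rw [hz, norm_smul, norm_pow, mul_comm]
  gcongr

theorem Differentiable.isBigO_pow_of_tendsto_cobounded {φ : ℂ → ℂ} (hφ : Differentiable ℂ φ)
    (hprop : Tendsto φ (cobounded ℂ) (cobounded ℂ)) : ∃ N : ℕ, φ =O[cobounded ℂ] (· ^ N) := by
  -- `g z = 1 / φ (1 / z)`, with its removable singularity at `0` filled in
  set g : ℂ → ℂ := Function.update (fun z => (φ z⁻¹)⁻¹) 0 0
  have hlarge : Tendsto (fun z => φ z⁻¹) (𝓝[≠] 0) (cobounded ℂ) :=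
    hprop.comp tendsto_inv₀_nhdsNE_zero
  have hne : ∀ᶠ z in 𝓝[≠] (0 : ℂ), z ≠ 0 ∧ φ z⁻¹ ≠ 0 :=
    eventually_mem_nhdsWithin.and (hlarge.eventually_ne_cobounded 0)
  have hg : ∀ z ≠ 0, g =ᶠ[𝓝 z] fun z => (φ z⁻¹)⁻¹ := fun z hz => by
    filter_upwards [isOpen_ne.mem_nhds hz] with w hw
    exact Function.update_of_ne hw _ _
  have hgan : AnalyticAt ℂ g 0 := by
    refine Complex.analyticAt_of_differentiable_on_punctured_nhds_of_continuousAt ?_ ?_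
    · filter_upwards [hne] with z ⟨hz, hφz⟩
      exact (((hφ _).comp z (differentiableAt_inv hz)).inv hφz).congr_of_eventuallyEq (hg z hz)
    · exact continuousAt_update_same.mpr (tendsto_inv₀_cobounded.comp hlarge)
  have hord : analyticOrderAt g 0 ≠ ⊤ := by
    intro htop
    obtain ⟨z, hgz, hz, hφz⟩ :=
      ((analyticOrderAt_eq_top.mp htop).filter_mono nhdsWithin_le_nhds |>.and hne).exists
    rw [(hg z hz).eq_of_nhds] at hgz
    exact inv_ne_zero hφz hgz
  obtain ⟨N, c, hc, hlow⟩ := hgan.exists_mul_norm_pow_le_norm hord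
  refine ⟨N, IsBigO.of_bound c⁻¹ ?_⟩
  filter_upwards [tendsto_inv₀_cobounded.eventually hlow, eventually_ne_cobounded 0]
    with t ht ht0
  rw [(hg t⁻¹ (inv_ne_zero ht0)).eq_of_nhds, inv_inv, sub_zero, norm_inv, norm_inv, inv_pow]
    at ht
  have hpos : 0 < c * (‖t‖ ^ N)⁻¹ := by have := norm_pos_iff.mpr ht0; positivity
  have hφt := (le_inv_comm₀ hpos (inv_pos.mp (hpos.trans_le ht))).mp ht
  rwa [mul_inv, inv_inv, ← norm_pow] at hφt

theorem Differentiable.apply_eq_apply_of_leftInverse_mul_exp {h ψ : ℂ → ℂ}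
    (hh : Differentiable ℂ h) (hψ : Continuous ψ)
    (hinv : Function.LeftInverse ψ fun t => t * cexp (h t)) (z w : ℂ) : h z = h w := by
  have hprop : Tendsto (fun t => t * cexp (h t)) (cobounded ℂ) (cobounded ℂ) := by
    simpa only [cobounded_eq_cocompact] using hinv.tendsto_cocompact hψ
  obtain ⟨N, hN⟩ := (differentiable_id.fun_mul hh.cexp).isBigO_pow_of_tendsto_cobounded hprop
  obtain ⟨A, hA⟩ := hN.bound
  obtain ⟨R, -, hR⟩ := hasBasis_cobounded_norm.eventually_iff.mp hA
  set R' := max R 1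
  have hlarge : ∀ t : ℂ, R' ≤ ‖t‖ → (h t).re ≤ Real.log A + N * Real.log ‖t‖ := by
    intro t ht
    have hexp_pos : 0 < ‖cexp (h t)‖ := norm_pos_iff.mpr (Complex.exp_ne_zero _)
    have hexp : ‖cexp (h t)‖ ≤ A * ‖t‖ ^ N := calc
      ‖cexp (h t)‖ ≤ ‖t‖ * ‖cexp (h t)‖ :=
        le_mul_of_one_le_left (norm_nonneg _) ((le_max_right _ _).trans ht)
      _ ≤ A * ‖t‖ ^ N := by simpa using hR ((le_max_left _ _).trans ht)
    have ht0 : 0 < ‖t‖ := zero_lt_one.trans_le ((le_max_right _ _).trans ht)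
    have hA : 0 < A := pos_of_mul_pos_left (hexp_pos.trans_le hexp) (by positivity)
    rw [← Real.log_exp (h t).re, ← norm_exp, ← Real.log_pow,
      ← Real.log_mul hA.ne' (pow_pos ht0 N).ne']
    exact Real.log_le_log hexp_pos hexp
  obtain ⟨M₀, hM₀⟩ := (isCompact_closedBall (0 : ℂ) R').bddAbove_image
    (continuous_re.comp hh.continuous).continuousOn
  set B : ℝ → ℝ := fun r => max M₀ (Real.log A) + N * Real.log (1 + r)
  have hB : B =o[atTop] id :=
    (isLittleO_const_id_atTop _).add (((Real.isLittleO_log_id_atTop.comp_tendsto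
      (tendsto_atTop_add_const_left _ 1 tendsto_id)).trans_isBigO
      ((isLittleO_const_id_atTop 1).isBigO.add (isBigO_refl _ _))).const_mul_left _)
  refine hh.apply_eq_apply_of_re_le_of_isLittleO hB (fun r t ht => ?_) z w
  have hlog : 0 ≤ (N : ℝ) * Real.log (1 + r) :=
    mul_nonneg N.cast_nonneg (Real.log_nonneg (by linarith [norm_nonneg t]))
  rcases le_or_gt ‖t‖ R' with hsmall | hbig
  · have := mem_upperBounds.mp hM₀ _ (mem_image_of_mem _ (mem_closedBall_zero_iff.mpr hsmall))
    linarith [le_max_left M₀ (Real.log A), show (h t).re ≤ M₀ from this]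
  · have hlog' : (N : ℝ) * Real.log ‖t‖ ≤ N * Real.log (1 + r) := by
      gcongr
      · exact zero_lt_one.trans_le ((le_max_right _ _).trans hbig.le)
      · linarith
    linarith [hlarge t hbig.le, le_max_right M₀ (Real.log A)]

theorem apply_eq_apply_zero_of_exp_smul_leftInverse {k m : E → ℂ} (hk : Differentiable ℂ k)
    (hm : Continuous m) (hkm : ∀ v, cexp (m (cexp (k v) • v)) • cexp (k v) • v = v) (v : E) :
    k v = k 0 := by
  rcases eq_or_ne v 0 with rfl | hv
  · rfl
  have hinv : Function.LeftInverse (fun s : ℂ => s * cexp (m (s • v)))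
      (fun t => t * cexp (k (t • v))) := fun t => by
    apply smul_left_injective ℂ hv
    simpa [smul_smul, mul_comm, mul_left_comm] using hkm (t • v)
  simpa using (hk.comp (differentiable_id.smul_const v)).apply_eq_apply_of_leftInverse_mul_exp
    (continuous_id.mul (hm.comp (continuous_id.smul continuous_const)).cexp) hinv 1 0

theorem normalized_automorphisms_eq_of_norm_ratio_exp {n : ℕ}
    (F G : EuclideanSpace ℂ (Fin n) → EuclideanSpace ℂ (Fin n))
    (hF : Differentiable ℂ F) (hG : Differentiable ℂ G)
    (Finv Ginv : EuclideanSpace ℂ (Fin n) → EuclideanSpace ℂ (Fin n))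
    (hFinv : Differentiable ℂ Finv) (hGinv : Differentiable ℂ Ginv)
    (hFl : Function.LeftInverse Finv F) (hFr : Function.RightInverse Finv F)
    (hGl : Function.LeftInverse Ginv G) (hGr : Function.RightInverse Ginv G)
    (hF0 : F 0 = 0) (hG0 : G 0 = 0)
    (hDF : fderiv ℂ F 0 = ContinuousLinearMap.id ℂ (EuclideanSpace ℂ (Fin n)))
    (hDG : fderiv ℂ G 0 = ContinuousLinearMap.id ℂ (EuclideanSpace ℂ (Fin n)))
    (f : EuclideanSpace ℂ (Fin n) → ℂ) (hf : Differentiable ℂ f)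
    (heq : ∀ z, ‖F z‖ = ‖Complex.exp (f z)‖ * ‖G z‖) :
    F = G := by
  have hFinv0 : Finv 0 = 0 := by simpa [hF0] using hFl 0
  have hGinv0 : Ginv 0 = 0 := by simpa [hG0] using hGl 0
  have hDF' := hDF ▸ (hF 0).hasFDerivAt
  have hDG' := hDG ▸ (hG 0).hasFDerivAt
  have hFGinv : ∀ v, F (Ginv v) = cexp (f (Ginv v) - f 0) • v := fun v => by
    simpa [hGinv0] using eq_exp_smul_of_norm_eq_norm_exp_mul_norm (hF.comp hGinv)
      (hDF'.comp_of_rightInverse hDG' hGinv.continuous.continuousAt hGinv0 hGr) (hf.comp hGinv)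
      (fun z => by simpa [hGr z] using heq (Ginv z)) v
  have hGFinv : ∀ v, G (Finv v) = cexp (-f (Finv v) + f 0) • v := fun v => by
    refine (eq_exp_smul_of_norm_eq_norm_exp_mul_norm (hG.comp hFinv)
      (hDG'.comp_of_rightInverse hDF' hFinv.continuous.continuousAt hFinv0 hFr)
      (p := fun v => -f (Finv v)) (hf.comp hFinv).neg (fun z => ?_) v).trans
      (by simp [hFinv0, sub_eq_add_neg])
    have hz := heq (Finv z)
    rw [hFr z] at hz
    rw [Function.comp_apply, hz, ← mul_assoc, ← norm_mul, ← Complex.exp_add, neg_add_cancel,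
      Complex.exp_zero, norm_one, one_mul]
  have hk := apply_eq_apply_zero_of_exp_smul_leftInverse (k := fun v => f (Ginv v) - f 0)
    (m := fun v => -f (Finv v) + f 0) ((hf.comp hGinv).sub_const (f 0))
    ((hf.comp hFinv).continuous.neg.add continuous_const)
    (fun v => by rw [← hFGinv, ← hGFinv, hFl, hGr])
  funext z
  calc F z = F (Ginv (G z)) := by rw [hGl z]
    _ = G z := by rw [hFGinv, hk, hGinv0, sub_self, Complex.exp_zero, one_smul]
end

section
/- Every holomorphic automorphism of ℂ is affine: if F : ℂ → ℂ is a bijective entire function with holomorphic inverse, then F(z) = F(0) + F'(0)·z for all z, with F'(0) ≠ 0. -/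
/-!
A bijective entire function with entire inverse is a homeomorphism of `ℂ`, hence proper, so
`F z - F 0 → ∞` as `z → ∞`. The difference quotient `k = dslope F 0` is entire and zero-free
(by injectivity and `F'(0) ≠ 0`), and `1 / k z = z / (F z - F 0) = O(z)` at infinity. Liouville's
theorem applied to the difference quotient of `1 / k` shows that `1 / k` is affine; a zero-free
affine function is constant, so `k ≡ F'(0)`.
-/

open Filter Asymptotics

theorem deriv_ne_zero_of_leftInverse {𝕜 : Type*} [NontriviallyNormedField 𝕜] {f g : 𝕜 → 𝕜}
    {x : 𝕜} (hg : DifferentiableAt 𝕜 g (f x)) (hf : DifferentiableAt 𝕜 f x)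
    (hgf : Function.LeftInverse g f) : deriv f x ≠ 0 := by
  have hchain : HasDerivAt (g ∘ f) (deriv g (f x) * deriv f x) x :=
    hg.hasDerivAt.comp x hf.hasDerivAt
  rw [show g ∘ f = id from funext hgf] at hchain
  intro h0
  simpa [h0] using (hasDerivAt_id x).unique hchain

theorem dslope_ne_zero_of_injective {𝕜 E : Type*} [NontriviallyNormedField 𝕜]
    [NormedAddCommGroup E] [NormedSpace 𝕜 E] {f : 𝕜 → E} {a : 𝕜} (hf : Function.Injective f)
    (ha : deriv f a ≠ 0) (z : 𝕜) : dslope f a z ≠ 0 := by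
  rcases eq_or_ne z a with rfl | hz
  · rwa [dslope_same]
  · intro h
    have hfz := sub_smul_dslope f a z
    rw [h, smul_zero, eq_comm, sub_eq_zero] at hfz
    exact hz (hf hfz)

theorem isBigO_inv_dslope_zero_of_tendsto_cocompact {𝕜 : Type*} [NontriviallyNormedField 𝕜]
    [ProperSpace 𝕜] {f : 𝕜 → 𝕜} (hf : Tendsto f (cocompact 𝕜) (cocompact 𝕜)) :
    (dslope f 0)⁻¹ =O[cocompact 𝕜] id := by
  refine IsBigO.of_bound 1 ?_
  filter_upwards [(tendsto_dist_right_cocompact_atTop (f 0)).comp hf |>.eventually_ge_atTop 1]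
    with z hz
  have hz0 : z ≠ 0 := by rintro rfl; norm_num at hz
  rw [Function.comp_apply, dist_eq_norm] at hz
  rw [Pi.inv_apply, dslope_of_ne _ hz0, slope_def_field, sub_zero, inv_div, norm_div, id, one_mul]
  exact div_le_self (norm_nonneg z) hz

theorem Complex.differentiable_dslope {E : Type*} [NormedAddCommGroup E] [NormedSpace ℂ E]
    [CompleteSpace E] {f : ℂ → E} {a : ℂ} :
    Differentiable ℂ (dslope f a) ↔ Differentiable ℂ f := by
  simp only [← differentiableOn_univ]
  exact Complex.differentiableOn_dslope univ_mem

theorem Differentiable.exists_eq_add_smul_of_isBigO {E : Type*} [NormedAddCommGroup E]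
    [NormedSpace ℂ E] [CompleteSpace E] {h : ℂ → E} (hh : Differentiable ℂ h)
    (hO : h =O[cocompact ℂ] id) :
    ∃ c : E, ∀ z, h z = h 0 + z • c := by
  have hg : Differentiable ℂ (dslope h 0) := Complex.differentiable_dslope.2 hh
  have hbdd : dslope h 0 =O[cocompact ℂ] (1 : ℂ → ℝ) := by
    obtain ⟨C, hC⟩ := hO.bound
    refine IsBigO.of_bound (C + ‖h 0‖) ?_
    filter_upwards [hC, tendsto_norm_cocompact_atTop.eventually_ge_atTop 1] with z hCz hz
    have hz0 : z ≠ 0 := by rintro rfl; norm_num at hz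
    rw [dslope_of_ne _ hz0, slope_def_module, sub_zero, norm_smul, norm_inv, Pi.one_apply,
      norm_one, mul_one, inv_mul_le_iff₀ (by positivity)]
    calc ‖h z - h 0‖ ≤ ‖h z‖ + ‖h 0‖ := norm_sub_le _ _
      _ ≤ C * ‖z‖ + ‖h 0‖ * ‖z‖ :=
        add_le_add (by simpa using hCz) (le_mul_of_one_le_right (norm_nonneg _) hz)
      _ = ‖z‖ * (C + ‖h 0‖) := by ring
  obtain ⟨c, hc⟩ :=
    hg.exists_const_forall_eq_of_bounded (hg.continuous.isBounded_range_iff_isBigO.2 hbdd)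
  refine ⟨c, fun z => ?_⟩
  have hslope := sub_smul_dslope h 0 z
  rw [sub_zero, hc] at hslope
  rw [hslope, add_sub_cancel]

theorem Differentiable.apply_eq_apply_zero_of_isBigO_of_ne_zero {h : ℂ → ℂ}
    (hh : Differentiable ℂ h) (hO : h =O[cocompact ℂ] id) (h0 : ∀ z, h z ≠ 0) (z : ℂ) :
    h z = h 0 := by
  obtain ⟨c, hc⟩ := hh.exists_eq_add_smul_of_isBigO hO
  obtain rfl : c = 0 := by
    by_contra hc0
    exact h0 (-h 0 / c) (by rw [hc, smul_eq_mul]; field_simp; ring)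
  simpa using hc z

theorem automorphism_of_C_is_affine (F Finv : ℂ → ℂ)
    (hF : Differentiable ℂ F) (hFinv : Differentiable ℂ Finv)
    (hl : Function.LeftInverse Finv F) (hr : Function.RightInverse Finv F) :
    (∀ z, F z = F 0 + deriv F 0 * z) ∧ deriv F 0 ≠ 0 := by
  have hF0 : deriv F 0 ≠ 0 := deriv_ne_zero_of_leftInverse (hFinv _) (hF 0) hl
  have hk : Differentiable ℂ (dslope F 0) := Complex.differentiable_dslope.2 hF
  have hk0 : ∀ z, dslope F 0 z ≠ 0 := dslope_ne_zero_of_injective hl.injective hF0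
  have hproper : Tendsto F (cocompact ℂ) (cocompact ℂ) :=
    (Homeomorph.mk ⟨F, Finv, hl, hr⟩ hF.continuous hFinv.continuous).map_cocompact.le
  have hconst (z : ℂ) : dslope F 0 z = deriv F 0 := by
    have := (hk.inv hk0).apply_eq_apply_zero_of_isBigO_of_ne_zero
      (isBigO_inv_dslope_zero_of_tendsto_cocompact hproper) (fun w => inv_ne_zero (hk0 w)) z
    rwa [Pi.inv_apply, Pi.inv_apply, inv_inj, dslope_same] at this
  refine ⟨fun z => ?_, hF0⟩
  have hslope := sub_smul_dslope F 0 z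
  rw [sub_zero, hconst, smul_eq_mul] at hslope
  rw [mul_comm, hslope, add_sub_cancel]
end
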